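/- arXiv:2012.07812 — 6 statements merged into one kernel-verified Lean document; each statement's English description precedes it below -/
import Mathlib

section
/- Let X and Y be symmetric positive definite real n×n matrices. Then the matrix X⁻¹ + Y⁻¹ − (X+Y)⁻¹ is symmetric positive definite. -/
open Matrix

/-- For symmetric positive definite real matrices `X` and `Y`,
the matrix `X⁻¹ + Y⁻¹ − (X+Y)⁻¹` is symmetric positive definite. -/
theorem spd_inv_add_inv_sub_inv_add {n : ℕ} (X Y : Matrix (Fin n) (Fin n) ℝ)
    (hX : X.PosDef) (hY : Y.PosDef) :
    (X⁻¹ + Y⁻¹ - (X + Y)⁻¹).PosDef := by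
  set S := X + Y with hS
  have hSpd : S.PosDef := hX.add hY
  have hXu : IsUnit X := hX.isUnit
  have hSu : IsUnit S := hSpd.isUnit
  -- Key identity: X⁻¹ - S⁻¹ = S⁻¹ * (Y + Y * X⁻¹ * Y) * S⁻¹
  have hSdet : IsUnit S.det := isUnit_iff_ne_zero.mpr hSpd.det_pos.ne'
  have hXdet : IsUnit X.det := isUnit_iff_ne_zero.mpr hX.det_pos.ne'
  have hXX : X * X⁻¹ = 1 := mul_nonsing_inv X hXdet
  have hXXl : X⁻¹ * X = 1 := nonsing_inv_mul X hXdet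
  have key : X⁻¹ - S⁻¹ = S⁻¹ * (Y + Y * X⁻¹ * Y) * S⁻¹ := by
    have h1 : S * (X⁻¹ - S⁻¹) * S = Y + Y * X⁻¹ * Y := by
      rw [mul_sub, sub_mul, mul_nonsing_inv S hSdet, one_mul, hS]
      have e1 : (X + Y) * X⁻¹ * (X + Y) = X + Y + Y + Y * X⁻¹ * Y := by
        simp only [add_mul, mul_add, hXX, one_mul, mul_assoc, hXXl, mul_one]
        abel
      rw [e1]; abel
    calc X⁻¹ - S⁻¹ = S⁻¹ * (S * (X⁻¹ - S⁻¹) * S) * S⁻¹ := by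
          rw [mul_assoc, mul_assoc, mul_nonsing_inv S hSdet, mul_one,
            ← mul_assoc, nonsing_inv_mul S hSdet, one_mul]
      _ = S⁻¹ * (Y + Y * X⁻¹ * Y) * S⁻¹ := by rw [h1]
  have hYsym : Yᴴ = Y := hY.isHermitian
  have hmid : (Y + Y * X⁻¹ * Y).PosSemidef := by
    have := (hX.inv.posSemidef.conjTranspose_mul_mul_same Y)
    rw [hYsym] at this
    exact hY.posSemidef.add this
  have hsub : (X⁻¹ - S⁻¹).PosSemidef := by
    rw [key]
    have := hmid.conjTranspose_mul_mul_same S⁻¹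
    rwa [hSpd.isHermitian.inv.eq] at this
  have : X⁻¹ + Y⁻¹ - S⁻¹ = Y⁻¹ + (X⁻¹ - S⁻¹) := by abel
  rw [this]
  exact hY.inv.add_posSemidef hsub
end

section
/- Let Y be the symmetric real block matrix Y = [[A, B],[Bᵀ, C]] where A is a symmetric p×p matrix, C is a symmetric q×q matrix, and B is a p×q matrix. Suppose P is a p×p matrix satisfying the four Penrose conditions for A, namely A P A = A, P A P = P, (A P)ᵀ = A P, and (P A)ᵀ = P A (i.e., P is the Moore–Penrose pseudoinverse of A). Then Y is positive semidefinite if and only if: A is positive semidefinite, (I − A P) B = 0, and C − Bᵀ P B is positive semidefinite. -/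
open Matrix

private theorem albert_schur_eq {p q : ℕ} (A P : Matrix (Fin p) (Fin p) ℝ)
    (B : Matrix (Fin p) (Fin q) ℝ) (C : Matrix (Fin q) (Fin q) ℝ)
    (hAPB : A * P * B = B) (hBPA : Bᵀ * Pᵀ * A = Bᵀ)
    (hBPB : Bᵀ * Pᵀ * A * P * B = Bᵀ * P * B)
    (x : Fin p → ℝ) (y : Fin q → ℝ) :
    (Sum.elim x y) ᵥ* (fromBlocks A B Bᵀ C) ⬝ᵥ (Sum.elim x y) =
      (x + (P * B) *ᵥ y) ᵥ* A ⬝ᵥ (x + (P * B) *ᵥ y) +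
        y ᵥ* (C - Bᵀ * P * B) ⬝ᵥ y := by
  have h1 : Bᵀ * (Pᵀ * A) = Bᵀ := by rw [← Matrix.mul_assoc, hBPA]
  have h2 : A * (P * B) = B := by rw [← Matrix.mul_assoc, hAPB]
  have h3 : Bᵀ * (Pᵀ * (A * (P * B))) = Bᵀ * (P * B) := by
    simp only [← Matrix.mul_assoc] at hBPB ⊢; exact hBPB
  simp only [fromBlocks_mulVec, vecMul_fromBlocks, add_vecMul,
    dotProduct_mulVec, vecMul_sub, Matrix.mul_assoc, vecMul_mulVec, star_mulVec,
    sumElim_dotProduct_sumElim, dotProduct_add, add_dotProduct, sub_dotProduct,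
    vecMul_add, vecMul_vecMul, transpose_mul, Sum.elim_comp_inl, Sum.elim_comp_inr, h1, h2, h3]
  ring

private theorem coeff_zero_of_nonneg {c d : ℝ} (h : ∀ t : ℝ, 0 ≤ 2 * t * c + d) : c = 0 := by
  by_contra hc
  have h2c : (2 : ℝ) * c ≠ 0 := mul_ne_zero two_ne_zero hc
  have ht : 2 * (-(d + 1) / (2 * c)) * c + d = -1 := by field_simp; ring
  have h' := h (-(d + 1) / (2 * c))
  rw [ht] at h'
  linarith

/-- Generalized Schur-complement criterion (Albert): the symmetric block matrix
`[[A, B], [Bᵀ, C]]` is positive semidefinite iff `A` is positive semidefinite,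
`(I − A P) B = 0`, and `C − Bᵀ P B` is positive semidefinite, where `P` is the
Moore–Penrose pseudoinverse of `A`. -/
theorem posSemidef_fromBlocks_iff_pseudoinverse_top {p q : ℕ}
    (A : Matrix (Fin p) (Fin p) ℝ) (B : Matrix (Fin p) (Fin q) ℝ)
    (C : Matrix (Fin q) (Fin q) ℝ) (P : Matrix (Fin p) (Fin p) ℝ)
    (hA : A = Aᵀ) (hC : C = Cᵀ)
    (hP1 : A * P * A = A) (hP2 : P * A * P = P)
    (hP3 : (A * P)ᵀ = A * P) (hP4 : (P * A)ᵀ = P * A) :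
    (Matrix.fromBlocks A B Bᵀ C).PosSemidef ↔
      A.PosSemidef ∧ ((1 : Matrix (Fin p) (Fin p) ℝ) - A * P) * B = 0 ∧
        (C - Bᵀ * P * B).PosSemidef := by
  have hAH : A.IsHermitian := by
    rw [Matrix.IsHermitian, conjTranspose_eq_transpose_of_trivial, ← hA]
  have hsubA : ((1 : Matrix (Fin p) (Fin p) ℝ) - A * P) * A = 0 := by
    rw [sub_mul, one_mul, hP1, sub_self]
  have hPtA : Pᵀ * A = A * P := by
    conv_lhs => rw [hA]
    rw [← transpose_mul, hP3]
  -- identities that follow from `(1 - A * P) * B = 0`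
  have key : ∀ (_ : ((1 : Matrix (Fin p) (Fin p) ℝ) - A * P) * B = 0),
      A * P * B = B ∧ Bᵀ * Pᵀ * A = Bᵀ ∧ Bᵀ * Pᵀ * A * P * B = Bᵀ * P * B := by
    intro hB0
    have hAPB : A * P * B = B := by
      have h := hB0
      rw [Matrix.sub_mul, Matrix.one_mul, sub_eq_zero] at h
      exact h.symm
    have hBPA : Bᵀ * Pᵀ * A = Bᵀ :=
      calc Bᵀ * Pᵀ * A = Bᵀ * (A * P) := by rw [Matrix.mul_assoc, hPtA]
        _ = (A * P * B)ᵀ := by rw [transpose_mul, hP3]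
        _ = Bᵀ := by rw [hAPB]
    exact ⟨hAPB, hBPA, by rw [hBPA]⟩
  constructor
  · intro hY; obtain ⟨hHerm, hq⟩ := posSemidef_iff_dotProduct_mulVec.mp hY
    have hq' : ∀ z, 0 ≤ z ⬝ᵥ ((fromBlocks A B Bᵀ C) *ᵥ z) := fun z => by
      simpa using hq z
    have hApsd : A.PosSemidef := by
      refine posSemidef_iff_dotProduct_mulVec.mpr ⟨hAH, fun x => ?_⟩
      have h := hq' (Sum.elim x 0)
      simpa [fromBlocks_mulVec, sumElim_dotProduct_sumElim] using h
    have hker : ∀ u, A *ᵥ u = 0 → ∀ v, u ⬝ᵥ (B *ᵥ v) = 0 := by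
      intro u hu v
      apply coeff_zero_of_nonneg (d := v ⬝ᵥ (C *ᵥ v))
      intro t
      have hsymm : v ⬝ᵥ (Bᵀ *ᵥ u) = u ⬝ᵥ (B *ᵥ v) := by
        rw [dotProduct_mulVec, vecMul_transpose, dotProduct_comm]
      have h := hq' (Sum.elim (t • u) v)
      have e : (Sum.elim (t • u) v) ⬝ᵥ ((fromBlocks A B Bᵀ C) *ᵥ (Sum.elim (t • u) v)) =
          2 * t * (u ⬝ᵥ (B *ᵥ v)) + v ⬝ᵥ (C *ᵥ v) := by
        simp only [fromBlocks_mulVec, sumElim_dotProduct_sumElim, mulVec_smul, hu,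
          smul_zero, zero_add, dotProduct_add, smul_dotProduct, dotProduct_smul,
          smul_eq_mul, hsymm, Sum.elim_comp_inl, Sum.elim_comp_inr]
        ring
      rw [e] at h
      exact h
    have hsym1 : ((1 : Matrix (Fin p) (Fin p) ℝ) - A * P)ᵀ = 1 - A * P := by
      rw [transpose_sub, transpose_one, hP3]
    have hAsub : A * ((1 : Matrix (Fin p) (Fin p) ℝ) - A * P) = 0 := by
      have h := congrArg Matrix.transpose hsubA
      rwa [transpose_mul, hsym1, ← hA, transpose_zero] at h
    have hB0 : ((1 : Matrix (Fin p) (Fin p) ℝ) - A * P) * B = 0 := by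
      have hMt : ((1 : Matrix (Fin p) (Fin p) ℝ) - A * P)ᵀ * B = 0 := by
        ext i j
        have hu : A *ᵥ (((1 : Matrix (Fin p) (Fin p) ℝ) - A * P) *ᵥ Pi.single i 1) = 0 := by
          rw [mulVec_mulVec, hAsub, zero_mulVec]
        have h := hker _ hu (Pi.single j 1)
        rw [mulVec_single_one, mulVec_single_one] at h
        simp only [Matrix.mul_apply, dotProduct, Matrix.transpose_apply, Matrix.zero_apply] at h ⊢
        exact h
      rwa [hsym1] at hMt
    obtain ⟨hAPB, hBPA, hBPB⟩ := key hB0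
    have hBtPt : Bᵀ * Pᵀ * B = Bᵀ * P * B :=
      calc Bᵀ * Pᵀ * B = Bᵀ * Pᵀ * (A * P * B) := by rw [hAPB]
        _ = Bᵀ * P * B := by rw [← Matrix.mul_assoc, ← Matrix.mul_assoc, hBPB]
    have hSherm : (C - Bᵀ * P * B).IsHermitian := by
      rw [Matrix.IsHermitian, conjTranspose_eq_transpose_of_trivial, transpose_sub, ← hC,
        transpose_mul, transpose_mul, transpose_transpose, ← Matrix.mul_assoc, hBtPt]
    refine ⟨hApsd, hB0, posSemidef_iff_dotProduct_mulVec.mpr ⟨hSherm, fun v => ?_⟩⟩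
    have h := hq' (Sum.elim (-((P * B) *ᵥ v)) v)
    have e := albert_schur_eq A P B C hAPB hBPA hBPB (-((P * B) *ᵥ v)) v
    rw [neg_add_cancel, zero_vecMul, zero_dotProduct, zero_add] at e
    rw [dotProduct_mulVec, e] at h
    simpa [dotProduct_mulVec] using h
  · rintro ⟨hApsd, hB0, hSpsd⟩
    obtain ⟨hAPB, hBPA, hBPB⟩ := key hB0
    refine posSemidef_iff_dotProduct_mulVec.mpr ⟨?_, fun z => ?_⟩
    · have hCH : C.IsHermitian := by
        rw [Matrix.IsHermitian, conjTranspose_eq_transpose_of_trivial, ← hC]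
      rw [isHermitian_fromBlocks_iff]
      exact ⟨hAH, by simp [conjTranspose_eq_transpose_of_trivial],
        by simp [conjTranspose_eq_transpose_of_trivial], hCH⟩
    · have e := albert_schur_eq A P B C hAPB hBPA hBPB (z ∘ Sum.inl) (z ∘ Sum.inr)
      rw [Sum.elim_comp_inl_inr] at e
      have h1 : 0 ≤ (z ∘ Sum.inl + (P * B) *ᵥ (z ∘ Sum.inr)) ᵥ* A ⬝ᵥ
          (z ∘ Sum.inl + (P * B) *ᵥ (z ∘ Sum.inr)) := by
        have h := hApsd.dotProduct_mulVec_nonneg (z ∘ Sum.inl + (P * B) *ᵥ (z ∘ Sum.inr))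
        simpa [dotProduct_mulVec] using h
      have h2 : 0 ≤ (z ∘ Sum.inr) ᵥ* (C - Bᵀ * P * B) ⬝ᵥ (z ∘ Sum.inr) := by
        have h := hSpsd.dotProduct_mulVec_nonneg (z ∘ Sum.inr)
        simpa [dotProduct_mulVec] using h
      rw [show star z = z from star_trivial z, dotProduct_mulVec, e]
      exact add_nonneg h1 h2
end

section
/- Let Y be the symmetric real block matrix Y = [[A, B],[Bᵀ, C]] where A is a symmetric p×p matrix, C is a symmetric q×q matrix, and B is a p×q matrix. Suppose Q is a q×q matrix satisfying the four Penrose conditions for C, namely C Q C = C, Q C Q = Q, (C Q)ᵀ = C Q, and (Q C)ᵀ = Q C. Then Y is positive semidefinite if and only if: C is positive semidefinite, (I − C Q) Bᵀ = 0, and A − B Q Bᵀ is positive semidefinite. -/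
open Matrix

section Aux

variable {m n k : Type*} [Fintype m] [Fintype n] [Fintype k]

lemma dot_mulVec_comm (x : m → ℝ) (N : Matrix m n ℝ) (y : n → ℝ) :
    x ⬝ᵥ (N *ᵥ y) = y ⬝ᵥ (Nᵀ *ᵥ x) := by
  rw [dotProduct_mulVec, mulVec_transpose, dotProduct_comm]

lemma mulVec_dot_mulVec (M : Matrix m n ℝ) (N : Matrix m k ℝ) (x : n → ℝ) (y : k → ℝ) :
    (M *ᵥ x) ⬝ᵥ (N *ᵥ y) = x ⬝ᵥ ((Mᵀ * N) *ᵥ y) := by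
  rw [← mulVec_mulVec, dot_mulVec_comm x Mᵀ (N *ᵥ y), transpose_transpose, dotProduct_comm]

lemma quad_fromBlocks (A : Matrix m m ℝ) (B : Matrix m n ℝ) (D : Matrix n m ℝ)
    (C : Matrix n n ℝ) (x : m → ℝ) (y : n → ℝ) :
    Sum.elim x y ⬝ᵥ (fromBlocks A B D C) *ᵥ Sum.elim x y =
      x ⬝ᵥ (A *ᵥ x) + x ⬝ᵥ (B *ᵥ y) + y ⬝ᵥ (D *ᵥ x) + y ⬝ᵥ (C *ᵥ y) := by
  rw [fromBlocks_mulVec, sumElim_dotProduct_sumElim, dotProduct_add, dotProduct_add]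
  simp only [Sum.elim_comp_inl, Sum.elim_comp_inr]
  ring

omit [Fintype m] in
lemma isHermitian_of_real {M : Matrix m m ℝ} (h : Mᵀ = M) : M.IsHermitian := by
  rw [Matrix.IsHermitian, conjTranspose_eq_transpose_of_trivial]; exact h

lemma bilin_eq_zero {M : Matrix m n ℝ} [DecidableEq m] [DecidableEq n]
    (h : ∀ (x : m → ℝ) (y : n → ℝ), x ⬝ᵥ (M *ᵥ y) = 0) : M = 0 := by
  ext i j
  simpa [mulVec_single, single_dotProduct] using h (Pi.single i 1) (Pi.single j 1)

end Aux

/-- Generalized Schur-complement criterion (Albert), bottom-block version: the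
symmetric block matrix `[[A, B], [Bᵀ, C]]` is positive semidefinite iff `C` is
positive semidefinite, `(I − C Q) Bᵀ = 0`, and `A − B Q Bᵀ` is positive
semidefinite, where `Q` is the Moore–Penrose pseudoinverse of `C`. -/
theorem posSemidef_fromBlocks_iff_pseudoinverse_bot {p q : ℕ}
    (A : Matrix (Fin p) (Fin p) ℝ) (B : Matrix (Fin p) (Fin q) ℝ)
    (C : Matrix (Fin q) (Fin q) ℝ) (Q : Matrix (Fin q) (Fin q) ℝ)
    (hA : A = Aᵀ) (hC : C = Cᵀ)
    (hQ1 : C * Q * C = C) (hQ2 : Q * C * Q = Q)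
    (hQ3 : (C * Q)ᵀ = C * Q) (hQ4 : (Q * C)ᵀ = Q * C) :
    (Matrix.fromBlocks A B Bᵀ C).PosSemidef ↔
      C.PosSemidef ∧ ((1 : Matrix (Fin q) (Fin q) ℝ) - C * Q) * Bᵀ = 0 ∧
        (A - B * Q * Bᵀ).PosSemidef := by
  -- Q is symmetric (uniqueness of the pseudoinverse)
  have f2 : Qᵀ * C = C * Q := by
    have h := hQ3; rw [transpose_mul, ← hC] at h; exact h
  have f1 : C * Qᵀ = Q * C := by
    have h := hQ4; rw [transpose_mul, ← hC] at h; exact h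
  have f3 : C * Qᵀ * C = C := by
    have h := congrArg Matrix.transpose hQ1
    rwa [transpose_mul, transpose_mul, ← hC, ← Matrix.mul_assoc] at h
  have f4 : Qᵀ * C * Qᵀ = Qᵀ := by
    have h := congrArg Matrix.transpose hQ2
    rwa [transpose_mul, transpose_mul, ← hC, ← Matrix.mul_assoc] at h
  -- (i) : Qᵀ = Qᵀ * Q * C
  have fi : Qᵀ * Q * C = Qᵀ := by
    calc Qᵀ * Q * C = Qᵀ * (Q * C) := by rw [Matrix.mul_assoc]
      _ = Qᵀ * (C * Qᵀ) := by rw [f1]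
      _ = Qᵀ * C * Qᵀ := by rw [Matrix.mul_assoc]
      _ = Qᵀ := f4
  have e1 : Qᵀ = Qᵀ * C * Q := by
    calc Qᵀ = Qᵀ * Q * C := fi.symm
      _ = Qᵀ * Q * (C * Qᵀ * C) := by rw [f3]
      _ = Qᵀ * Q * C * (Qᵀ * C) := by simp only [Matrix.mul_assoc]
      _ = Qᵀ * (Qᵀ * C) := by rw [fi]
      _ = Qᵀ * (C * Q) := by rw [f2]
      _ = Qᵀ * C * Q := by rw [Matrix.mul_assoc]
  have hQsym : Qᵀ = Q := by
    have h := congrArg Matrix.transpose e1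
    rw [transpose_mul, transpose_mul, transpose_transpose, ← hC,
      ← Matrix.mul_assoc, ← e1] at h
    exact h.symm
  have hMC : ((1 : Matrix (Fin q) (Fin q) ℝ) - C * Q) * C = 0 := by
    rw [sub_mul, one_mul, hQ1, sub_self]
  have hCM : C * ((1 : Matrix (Fin q) (Fin q) ℝ) - C * Q) = 0 := by
    have h := congrArg Matrix.transpose hMC
    rwa [transpose_mul, transpose_sub, transpose_one, hQ3, ← hC, transpose_zero] at h
  have hMsym : ((1 : Matrix (Fin q) (Fin q) ℝ) - C * Q)ᵀ = (1 - C * Q) := by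
    rw [transpose_sub, transpose_one, hQ3]
  have hQBT : (Q * Bᵀ)ᵀ = B * Q := by
    rw [transpose_mul, transpose_transpose, hQsym]
  constructor
  · intro h
    have hform : ∀ (x : Fin p → ℝ) (y : Fin q → ℝ),
        0 ≤ Sum.elim x y ⬝ᵥ (fromBlocks A B Bᵀ C) *ᵥ Sum.elim x y := fun x y => by
      simpa using h.dotProduct_mulVec_nonneg (Sum.elim x y)
    have hCpsd : C.PosSemidef := by
      refine PosSemidef.of_dotProduct_mulVec_nonneg (isHermitian_of_real hC.symm) fun y => ?_
      have h0 := hform 0 y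
      rw [quad_fromBlocks] at h0
      simpa using h0
    have hApos : ∀ x, 0 ≤ x ⬝ᵥ A *ᵥ x := fun x => by
      have h0 := hform x 0
      rw [quad_fromBlocks] at h0
      simpa using h0
    have hBM : B * ((1 : Matrix (Fin q) (Fin q) ℝ) - C * Q) = 0 := by
      apply bilin_eq_zero
      intro x y
      set M : Matrix (Fin q) (Fin q) ℝ := 1 - C * Q with hM
      set a := x ⬝ᵥ A *ᵥ x with hadef
      set b := x ⬝ᵥ (B * M) *ᵥ y with hbdef
      have key : ∀ t : ℝ, 0 ≤ t ^ 2 * a + 2 * t * b := by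
        intro t
        have h0 := hform (t • x) (M *ᵥ y)
        rw [quad_fromBlocks] at h0
        have e1 : t • x ⬝ᵥ A *ᵥ (t • x) = t ^ 2 * a := by
          rw [mulVec_smul, smul_dotProduct, dotProduct_smul, smul_eq_mul, smul_eq_mul, hadef]
          ring
        have e2 : t • x ⬝ᵥ B *ᵥ (M *ᵥ y) = t * b := by
          rw [smul_dotProduct, mulVec_mulVec, smul_eq_mul, hbdef]
        have e3 : (M *ᵥ y) ⬝ᵥ Bᵀ *ᵥ (t • x) = t * b := by
          rw [mulVec_smul, dotProduct_smul, mulVec_dot_mulVec, smul_eq_mul]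
          congr 1
          rw [hbdef, dot_mulVec_comm x (B * M) y, transpose_mul, hM, hMsym]
        have e4 : (M *ᵥ y) ⬝ᵥ C *ᵥ (M *ᵥ y) = 0 := by
          rw [mulVec_mulVec, hM, hCM]
          simp
        rw [e1, e2, e3, e4] at h0
        linarith
      have ha : 0 ≤ a := hApos x
      have ha1 : (0:ℝ) < a + 1 := by linarith
      set t0 : ℝ := b / (a + 1) with ht0
      have hbt : b = t0 * (a + 1) := (div_mul_cancel₀ b (ne_of_gt ha1)).symm
      have h1 := key (-t0)
      rw [hbt] at h1
      have ht02 : t0 ^ 2 ≤ 0 := by nlinarith [sq_nonneg t0, mul_nonneg (sq_nonneg t0) ha]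
      have : t0 = 0 := by
        have := le_antisymm ht02 (sq_nonneg t0)
        exact pow_eq_zero_iff two_ne_zero |>.mp this
      rw [hbt, this, zero_mul]
    refine ⟨hCpsd, ?_, ?_⟩
    · have h2 := congrArg Matrix.transpose hBM
      rwa [transpose_mul, hMsym, transpose_zero] at h2
    · have hBQCQ : B * Q * C * Q = B * Q := by
        rw [Matrix.mul_assoc B Q C, Matrix.mul_assoc B (Q * C) Q, hQ2]
      refine PosSemidef.of_dotProduct_mulVec_nonneg ?_ ?_
      · apply isHermitian_of_real
        rw [transpose_sub, ← hA, transpose_mul, transpose_mul, transpose_transpose, hQsym,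
          ← Matrix.mul_assoc]
      · intro x
        have h0 := hform x (-((Q * Bᵀ) *ᵥ x))
        rw [quad_fromBlocks] at h0
        have e2 : x ⬝ᵥ B *ᵥ (-((Q * Bᵀ) *ᵥ x)) = -(x ⬝ᵥ (B * Q * Bᵀ) *ᵥ x) := by
          rw [mulVec_neg, dotProduct_neg, mulVec_mulVec, ← Matrix.mul_assoc]
        have e3 : (-((Q * Bᵀ) *ᵥ x)) ⬝ᵥ Bᵀ *ᵥ x = -(x ⬝ᵥ (B * Q * Bᵀ) *ᵥ x) := by
          rw [neg_dotProduct, mulVec_dot_mulVec, hQBT]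
        have e4 : (-((Q * Bᵀ) *ᵥ x)) ⬝ᵥ C *ᵥ (-((Q * Bᵀ) *ᵥ x)) = x ⬝ᵥ (B * Q * Bᵀ) *ᵥ x := by
          rw [mulVec_neg, dotProduct_neg, neg_dotProduct, neg_neg, mulVec_mulVec,
            mulVec_dot_mulVec, hQBT, ← Matrix.mul_assoc, ← Matrix.mul_assoc, hBQCQ]
        rw [e2, e3, e4] at h0
        have goal0 : 0 ≤ x ⬝ᵥ (A - B * Q * Bᵀ) *ᵥ x := by
          rw [sub_mulVec, dotProduct_sub]
          linarith
        simpa using goal0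
  · rintro ⟨hCpsd, hMB, hSpsd⟩
    have hB1 : C * (Q * Bᵀ) = Bᵀ := by
      have h := hMB
      rw [Matrix.sub_mul, Matrix.one_mul, sub_eq_zero] at h
      rw [← Matrix.mul_assoc, ← h]
    have hB2 : B * Q * C = B := by
      have h := congrArg Matrix.transpose hB1
      rwa [transpose_mul, transpose_mul, transpose_transpose, hQsym, ← hC] at h
    refine PosSemidef.of_dotProduct_mulVec_nonneg ?_ ?_
    · apply isHermitian_of_real
      rw [fromBlocks_transpose, transpose_transpose, ← hA, ← hC]
    · intro v
      have hv : Sum.elim (v ∘ Sum.inl) (v ∘ Sum.inr) = v := Sum.elim_comp_inl_inr v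
      set x := v ∘ Sum.inl
      set y := v ∘ Sum.inr
      have h0 := hSpsd.dotProduct_mulVec_nonneg x
      have hz := hCpsd.dotProduct_mulVec_nonneg (y + (Q * Bᵀ) *ᵥ x)
      simp only [star_trivial] at h0 hz ⊢
      rw [← hv, quad_fromBlocks]
      rw [sub_mulVec, dotProduct_sub] at h0
      have expand : (y + (Q * Bᵀ) *ᵥ x) ⬝ᵥ C *ᵥ (y + (Q * Bᵀ) *ᵥ x) =
          y ⬝ᵥ C *ᵥ y + y ⬝ᵥ Bᵀ *ᵥ x + x ⬝ᵥ B *ᵥ y + x ⬝ᵥ (B * Q * Bᵀ) *ᵥ x := by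
        rw [mulVec_add, dotProduct_add, add_dotProduct, add_dotProduct]
        have t2 : y ⬝ᵥ C *ᵥ ((Q * Bᵀ) *ᵥ x) = y ⬝ᵥ Bᵀ *ᵥ x := by
          rw [mulVec_mulVec, hB1]
        have t3 : ((Q * Bᵀ) *ᵥ x) ⬝ᵥ C *ᵥ y = x ⬝ᵥ B *ᵥ y := by
          rw [mulVec_dot_mulVec, hQBT, hB2]
        have t4 : ((Q * Bᵀ) *ᵥ x) ⬝ᵥ C *ᵥ ((Q * Bᵀ) *ᵥ x) = x ⬝ᵥ (B * Q * Bᵀ) *ᵥ x := by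
          rw [mulVec_mulVec, mulVec_dot_mulVec, hQBT, ← Matrix.mul_assoc, Matrix.mul_assoc,
            hB1, Matrix.mul_assoc]
        rw [t2, t3, t4]
        ring
      rw [expand] at hz
      linarith
end

section
/- In the discrete SBP setting described in the context, the second-derivative operator satisfies the identity D² = H⁻¹ (D²)ᵀ H − H⁻¹ Σ_{γ∈Γ} Dγᵀ Bγ Rγ + H⁻¹ Σ_{γ∈Γ} Rγᵀ Bγ Dγ. (This identity mimics applying integration by parts twice to ∫_Ω V ∇·(λ∇U) dΩ.) -/
open Matrix

lemma isDiag_transpose_eq {m : ℕ} {A : Matrix (Fin m) (Fin m) ℝ} (h : A.IsDiag) :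
    Aᵀ = A := by
  ext i j
  by_cases hij : i = j
  · subst hij; rfl
  · rw [transpose_apply, h (Ne.symm hij), h hij]

lemma isDiag_comm {m : ℕ} {A B : Matrix (Fin m) (Fin m) ℝ} (hA : A.IsDiag) (hB : B.IsDiag) :
    A * B = B * A := by
  rw [← hA.diagonal_diag, ← hB.diagonal_diag, diagonal_mul_diagonal, diagonal_mul_diagonal]
  exact congrArg diagonal (funext fun i => mul_comm _ _)

/-- SBP identity mimicking twice-applied integration by parts:
`D² = H⁻¹ (D²)ᵀ H − H⁻¹ Σ_γ Dγᵀ Bγ Rγ + H⁻¹ Σ_γ Rγᵀ Bγ Dγ`. -/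
theorem sbp_second_derivative_double_ibp_decomposition
    {n : ℕ} {Γ : Type*} [Fintype Γ] {nf : Γ → ℕ}
    (H Λxx Λxy Λyx Λyy Qx Qy Dx Dy D2 : Matrix (Fin n) (Fin n) ℝ)
    (R : ∀ γ : Γ, Matrix (Fin (nf γ)) (Fin n) ℝ)
    (B Nx Ny : ∀ γ : Γ, Matrix (Fin (nf γ)) (Fin (nf γ)) ℝ)
    (Dγ : ∀ γ : Γ, Matrix (Fin (nf γ)) (Fin n) ℝ)
    (hH : H.IsDiag) (hHinv : IsUnit H.det)
    (hxx : Λxx.IsDiag) (hxy : Λxy.IsDiag) (hyx : Λyx.IsDiag) (hyy : Λyy.IsDiag)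
    (hsym : Λxy = Λyx)
    (hB : ∀ γ, (B γ).IsDiag) (hNx : ∀ γ, (Nx γ).IsDiag) (hNy : ∀ γ, (Ny γ).IsDiag)
    (hDx : Dx = H⁻¹ * Qx) (hDy : Dy = H⁻¹ * Qy)
    (hEx : Qx + Qxᵀ = ∑ γ, (R γ)ᵀ * B γ * Nx γ * R γ)
    (hEy : Qy + Qyᵀ = ∑ γ, (R γ)ᵀ * B γ * Ny γ * R γ)
    (hDγ : ∀ γ, Dγ γ =
      Nx γ * R γ * (Λxx * Dx + Λxy * Dy) + Ny γ * R γ * (Λyx * Dx + Λyy * Dy))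
    (hD2 : D2 = Dx * (Λxx * Dx + Λxy * Dy) + Dy * (Λyx * Dx + Λyy * Dy)) :
    D2 = H⁻¹ * D2ᵀ * H - H⁻¹ * (∑ γ, (Dγ γ)ᵀ * B γ * R γ)
        + H⁻¹ * (∑ γ, (R γ)ᵀ * B γ * Dγ γ) := by
  -- abbreviations
  set Sx : Matrix (Fin n) (Fin n) ℝ := Λxx * Dx + Λxy * Dy with hSx
  set Sy : Matrix (Fin n) (Fin n) ℝ := Λyx * Dx + Λyy * Dy with hSy
  have hHT : Hᵀ = H := isDiag_transpose_eq hH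
  have hQx : H * Dx = Qx := by
    rw [hDx, ← Matrix.mul_assoc, Matrix.mul_nonsing_inv _ hHinv, Matrix.one_mul]
  have hQy : H * Dy = Qy := by
    rw [hDy, ← Matrix.mul_assoc, Matrix.mul_nonsing_inv _ hHinv, Matrix.one_mul]
  have hDxT : Dxᵀ * H = Qxᵀ := by
    rw [← hQx, Matrix.transpose_mul, hHT]
  have hDyT : Dyᵀ * H = Qyᵀ := by
    rw [← hQy, Matrix.transpose_mul, hHT]
  -- commutation of diagonal matrices with H, in applied form
  have cxx : ∀ M : Matrix (Fin n) (Fin n) ℝ, Λxx * (H * M) = H * (Λxx * M) := fun M => by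
    rw [← Matrix.mul_assoc, isDiag_comm hxx hH, Matrix.mul_assoc]
  have cyx : ∀ M : Matrix (Fin n) (Fin n) ℝ, Λyx * (H * M) = H * (Λyx * M) := fun M => by
    rw [← Matrix.mul_assoc, isDiag_comm hyx hH, Matrix.mul_assoc]
  have cyy : ∀ M : Matrix (Fin n) (Fin n) ℝ, Λyy * (H * M) = H * (Λyy * M) := fun M => by
    rw [← Matrix.mul_assoc, isDiag_comm hyy hH, Matrix.mul_assoc]
  -- sum computations
  have hsum1 : (∑ γ, (R γ)ᵀ * B γ * Dγ γ) = (Qx + Qxᵀ) * Sx + (Qy + Qyᵀ) * Sy := by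
    rw [hEx, hEy, Finset.sum_mul, Finset.sum_mul, ← Finset.sum_add_distrib]
    refine Finset.sum_congr rfl fun γ _ => ?_
    rw [hDγ γ]
    simp only [Matrix.mul_add, Matrix.mul_assoc]
  have hsum2 : (∑ γ, (Dγ γ)ᵀ * B γ * R γ) = Sxᵀ * (Qx + Qxᵀ) + Syᵀ * (Qy + Qyᵀ) := by
    rw [hEx, hEy, Finset.mul_sum, Finset.mul_sum, ← Finset.sum_add_distrib]
    refine Finset.sum_congr rfl fun γ _ => ?_
    rw [hDγ γ, Matrix.transpose_add, Matrix.transpose_mul, Matrix.transpose_mul,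
      Matrix.transpose_mul, Matrix.transpose_mul,
      isDiag_transpose_eq (hNx γ), isDiag_transpose_eq (hNy γ)]
    have hbx : Nx γ * B γ = B γ * Nx γ := isDiag_comm (hNx γ) (hB γ)
    have hby : Ny γ * B γ = B γ * Ny γ := isDiag_comm (hNy γ) (hB γ)
    simp only [Matrix.add_mul, Matrix.mul_assoc, ← hbx, ← hby]
  -- the symmetry identity
  have helem : Sxᵀ * Qx + Syᵀ * Qy = Qxᵀ * Sx + Qyᵀ * Sy := by
    rw [← hQx, ← hQy, hSx, hSy, Matrix.transpose_add, Matrix.transpose_add,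
      Matrix.transpose_mul, Matrix.transpose_mul, Matrix.transpose_mul, Matrix.transpose_mul,
      Matrix.transpose_mul, Matrix.transpose_mul, hHT,
      isDiag_transpose_eq hxx, isDiag_transpose_eq hxy,
      isDiag_transpose_eq hyx, isDiag_transpose_eq hyy, hsym]
    simp only [Matrix.add_mul, Matrix.mul_add, Matrix.mul_assoc, cxx, cyx, cyy]
    abel
  -- the key identity against H
  have key : H * D2 = D2ᵀ * H - (∑ γ, (Dγ γ)ᵀ * B γ * R γ)
      + (∑ γ, (R γ)ᵀ * B γ * Dγ γ) := by
    have hL : H * D2 = Qx * Sx + Qy * Sy := by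
      rw [hD2, Matrix.mul_add, ← Matrix.mul_assoc, ← Matrix.mul_assoc, hQx, hQy]
    have hT : D2ᵀ * H = Sxᵀ * Qxᵀ + Syᵀ * Qyᵀ := by
      rw [hD2, Matrix.transpose_add, Matrix.transpose_mul, Matrix.transpose_mul,
        Matrix.add_mul, Matrix.mul_assoc, Matrix.mul_assoc, hDxT, hDyT]
    rw [hL, hT, hsum1, hsum2]
    have expand : Sxᵀ * Qxᵀ + Syᵀ * Qyᵀ - (Sxᵀ * (Qx + Qxᵀ) + Syᵀ * (Qy + Qyᵀ))
        + ((Qx + Qxᵀ) * Sx + (Qy + Qyᵀ) * Sy)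
        = Qx * Sx + Qy * Sy + ((Qxᵀ * Sx + Qyᵀ * Sy) - (Sxᵀ * Qx + Syᵀ * Qy)) := by
      simp only [Matrix.add_mul, Matrix.mul_add]
      abel
    rw [expand, ← helem, sub_self, add_zero]
  calc D2 = H⁻¹ * (H * D2) := by
        rw [← Matrix.mul_assoc, Matrix.nonsing_inv_mul _ hHinv, Matrix.one_mul]
    _ = H⁻¹ * D2ᵀ * H - H⁻¹ * (∑ γ, (Dγ γ)ᵀ * B γ * R γ)
        + H⁻¹ * (∑ γ, (R γ)ᵀ * B γ * Dγ γ) := by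
        rw [key, Matrix.mul_add, Matrix.mul_sub, Matrix.mul_assoc]
end

section
/- In the discrete SBP setting described in the context, the second-derivative operator satisfies the identity D² = −H⁻¹ M + H⁻¹ Σ_{γ∈Γ} Rγᵀ Bγ Dγ, where M := Dxᵀ H (Λxx Dx + Λxy Dy) + Dyᵀ H (Λyx Dx + Λyy Dy). (This identity mimics applying integration by parts once to ∫_Ω V ∇·(λ∇U) dΩ.) -/
open Matrix

/-- SBP identity mimicking once-applied integration by parts:
`D² = −H⁻¹ M + H⁻¹ Σ_γ Rγᵀ Bγ Dγ` with
`M = Dxᵀ H (Λxx Dx + Λxy Dy) + Dyᵀ H (Λyx Dx + Λyy Dy)`. -/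
theorem sbp_second_derivative_single_ibp_decomposition
    {n : ℕ} {Γ : Type*} [Fintype Γ] {nf : Γ → ℕ}
    (H Λxx Λxy Λyx Λyy Qx Qy Dx Dy D2 M : Matrix (Fin n) (Fin n) ℝ)
    (R : ∀ γ : Γ, Matrix (Fin (nf γ)) (Fin n) ℝ)
    (B Nx Ny : ∀ γ : Γ, Matrix (Fin (nf γ)) (Fin (nf γ)) ℝ)
    (Dγ : ∀ γ : Γ, Matrix (Fin (nf γ)) (Fin n) ℝ)
    (hH : H.IsDiag) (hHinv : IsUnit H.det)
    (hxx : Λxx.IsDiag) (hxy : Λxy.IsDiag) (hyx : Λyx.IsDiag) (hyy : Λyy.IsDiag)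
    (hsym : Λxy = Λyx)
    (hB : ∀ γ, (B γ).IsDiag) (hNx : ∀ γ, (Nx γ).IsDiag) (hNy : ∀ γ, (Ny γ).IsDiag)
    (hDx : Dx = H⁻¹ * Qx) (hDy : Dy = H⁻¹ * Qy)
    (hEx : Qx + Qxᵀ = ∑ γ, (R γ)ᵀ * B γ * Nx γ * R γ)
    (hEy : Qy + Qyᵀ = ∑ γ, (R γ)ᵀ * B γ * Ny γ * R γ)
    (hDγ : ∀ γ, Dγ γ =
      Nx γ * R γ * (Λxx * Dx + Λxy * Dy) + Ny γ * R γ * (Λyx * Dx + Λyy * Dy))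
    (hD2 : D2 = Dx * (Λxx * Dx + Λxy * Dy) + Dy * (Λyx * Dx + Λyy * Dy))
    (hM : M = Dxᵀ * H * (Λxx * Dx + Λxy * Dy) + Dyᵀ * H * (Λyx * Dx + Λyy * Dy)) :
    D2 = -(H⁻¹ * M) + H⁻¹ * (∑ γ, (R γ)ᵀ * B γ * Dγ γ) := by
  set Sx := Λxx * Dx + Λxy * Dy with hSx
  set Sy := Λyx * Dx + Λyy * Dy with hSy
  have hHs : Hᵀ = H := hH.isSymm
  have hDxt : Dxᵀ * H = Qxᵀ := by
    rw [hDx, Matrix.transpose_mul, Matrix.transpose_nonsing_inv, hHs, Matrix.mul_assoc,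
      Matrix.nonsing_inv_mul H hHinv, Matrix.mul_one]
  have hDyt : Dyᵀ * H = Qyᵀ := by
    rw [hDy, Matrix.transpose_mul, Matrix.transpose_nonsing_inv, hHs, Matrix.mul_assoc,
      Matrix.nonsing_inv_mul H hHinv, Matrix.mul_one]
  have hsum : (∑ γ, (R γ)ᵀ * B γ * Dγ γ)
      = (Qx + Qxᵀ) * Sx + (Qy + Qyᵀ) * Sy := by
    rw [hEx, hEy, Finset.sum_mul, Finset.sum_mul, ← Finset.sum_add_distrib]
    refine Finset.sum_congr rfl fun γ _ => ?_
    rw [hDγ γ]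
    simp only [Matrix.mul_add, Matrix.mul_assoc]
  have hmix : -(Qxᵀ * Sx + Qyᵀ * Sy) + ((Qx + Qxᵀ) * Sx + (Qy + Qyᵀ) * Sy)
      = Qx * Sx + Qy * Sy := by noncomm_ring
  rw [hsum, hM, hDxt, hDyt, hD2, hDx, hDy, ← Matrix.mul_neg, ← Matrix.mul_add, hmix]
  simp only [Matrix.mul_add, Matrix.mul_assoc]
end

section
/- Let T₁, T₂, T₂' be symmetric real m×m matrices, let C be a real m×p matrix and C' a real m×q matrix, and let P (p×p) and P' (q×q) be symmetric positive definite real matrices. Consider the symmetric (2m+p+q)×(2m+p+q) block matrix A with block rows [ T₁, −T₁, T₂C, −T₂'C' ], [ −T₁, T₁, −T₂C, T₂'C' ], [ CᵀT₂, −CᵀT₂, P, 0 ], [ −C'ᵀT₂', C'ᵀT₂', 0, P' ]. Then A is positive semidefinite if and only if T₁ − (T₂ C P⁻¹ Cᵀ T₂ + T₂' C' P'⁻¹ C'ᵀ T₂') is positive semidefinite. -/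
open Matrix

lemma aux_posDef_fromBlocks {p q : ℕ} {P : Matrix (Fin p) (Fin p) ℝ}
    {P' : Matrix (Fin q) (Fin q) ℝ} (hP : P.PosDef) (hP' : P'.PosDef) :
    (Matrix.fromBlocks P 0 0 P').PosDef := by
  refine Matrix.posDef_iff_dotProduct_mulVec.mpr ⟨Matrix.isHermitian_fromBlocks_iff.mpr ⟨hP.1, by simp, by simp, hP'.1⟩, fun x hx => ?_⟩
  have hx' : x = Sum.elim (x ∘ Sum.inl) (x ∘ Sum.inr) := (Sum.elim_comp_inl_inr x).symm
  set a := x ∘ Sum.inl with ha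
  set b := x ∘ Sum.inr with hb
  rw [hx', Matrix.fromBlocks_mulVec]
  simp only [Matrix.zero_mulVec, add_zero, zero_add, star_trivial,
    sumElim_dotProduct_sumElim, Sum.elim_comp_inl, Sum.elim_comp_inr]
  have hab : a ≠ 0 ∨ b ≠ 0 := by
    by_contra hc
    push_neg at hc
    apply hx
    rw [hx', hc.1, hc.2]
    simp
  rcases hab with h | h
  · have h1 : 0 < dotProduct (star a) (P *ᵥ a) := hP.dotProduct_mulVec_pos h
    have h2 : 0 ≤ dotProduct (star b) (P' *ᵥ b) := (Matrix.posSemidef_iff_dotProduct_mulVec.mp hP'.posSemidef).2 b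
    simp only [star_trivial] at h1 h2
    linarith
  · have h1 : 0 ≤ dotProduct (star a) (P *ᵥ a) := (Matrix.posSemidef_iff_dotProduct_mulVec.mp hP.posSemidef).2 a
    have h2 : 0 < dotProduct (star b) (P' *ᵥ b) := hP'.dotProduct_mulVec_pos h
    simp only [star_trivial] at h1 h2
    linarith

lemma fromBlocks_sub' {R : Type*} [AddGroup R] {n m o l : Type*}
    (A A' : Matrix n l R) (B B' : Matrix n m R) (C C' : Matrix o l R) (D D' : Matrix o m R) :
    Matrix.fromBlocks A B C D - Matrix.fromBlocks A' B' C' D' =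
      Matrix.fromBlocks (A - A') (B - B') (C - C') (D - D') := by
  ext (i | i) (j | j) <;> simp

lemma aux_block_posSemidef_iff {m : ℕ} {M : Matrix (Fin m) (Fin m) ℝ} :
    (Matrix.fromBlocks M (-M) (-M) M).PosSemidef ↔ M.PosSemidef := by
  constructor
  · intro h
    have key := h.conjTranspose_mul_mul_same (Matrix.fromRows (1 : Matrix (Fin m) (Fin m) ℝ) (0 : Matrix (Fin m) (Fin m) ℝ))
    have e : (Matrix.fromRows (1 : Matrix (Fin m) (Fin m) ℝ) (0 : Matrix (Fin m) (Fin m) ℝ))ᴴ *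
        (Matrix.fromBlocks M (-M) (-M) M) *
        Matrix.fromRows (1 : Matrix (Fin m) (Fin m) ℝ) (0 : Matrix (Fin m) (Fin m) ℝ) = M := by
      rw [Matrix.conjTranspose_fromRows_eq_fromCols_conjTranspose, Matrix.mul_assoc,
        Matrix.fromBlocks_mul_fromRows, Matrix.fromCols_mul_fromRows]
      simp
    rwa [e] at key
  · intro h
    have key := h.conjTranspose_mul_mul_same
      (Matrix.fromCols (1 : Matrix (Fin m) (Fin m) ℝ) (-1 : Matrix (Fin m) (Fin m) ℝ))
    have e : (Matrix.fromCols (1 : Matrix (Fin m) (Fin m) ℝ) (-1 : Matrix (Fin m) (Fin m) ℝ))ᴴ * M *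
        Matrix.fromCols (1 : Matrix (Fin m) (Fin m) ℝ) (-1 : Matrix (Fin m) (Fin m) ℝ) = Matrix.fromBlocks M (-M) (-M) M := by
      rw [Matrix.conjTranspose_fromCols_eq_fromRows_conjTranspose, Matrix.fromRows_mul,
        Matrix.fromRows_mul_fromCols]
      simp
    rwa [e] at key

/-- Generic interior-facet block of the energy-stability analysis of compact
adjoint-consistent SATs: the 4×4 block matrix `A` is positive semidefinite iff
`T₁ − (T₂ C P⁻¹ Cᵀ T₂ + T₂' C' P'⁻¹ C'ᵀ T₂') ⪰ 0`. -/
theorem compact_sat_facet_block_posSemidef_iff {m p q : ℕ}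
    (T₁ T₂ T₂' : Matrix (Fin m) (Fin m) ℝ)
    (C : Matrix (Fin m) (Fin p) ℝ) (C' : Matrix (Fin m) (Fin q) ℝ)
    (P : Matrix (Fin p) (Fin p) ℝ) (P' : Matrix (Fin q) (Fin q) ℝ)
    (hT₁ : T₁ = T₁ᵀ) (hT₂ : T₂ = T₂ᵀ) (hT₂' : T₂' = T₂'ᵀ)
    (hP : P.PosDef) (hP' : P'.PosDef) :
    (Matrix.fromBlocks
      (Matrix.fromBlocks T₁ (-T₁) (-T₁) T₁)
      (Matrix.fromBlocks (T₂ * C) (-(T₂' * C')) (-(T₂ * C)) (T₂' * C'))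
      (Matrix.fromBlocks (Cᵀ * T₂) (-(Cᵀ * T₂)) (-(C'ᵀ * T₂')) (C'ᵀ * T₂'))
      (Matrix.fromBlocks P 0 0 P')).PosSemidef ↔
      (T₁ - (T₂ * C * P⁻¹ * Cᵀ * T₂ + T₂' * C' * P'⁻¹ * C'ᵀ * T₂')).PosSemidef := by
  have hD : (Matrix.fromBlocks P 0 0 P').PosDef := aux_posDef_fromBlocks hP hP'
  haveI : Invertible (Matrix.fromBlocks P 0 0 P') :=
    Matrix.invertibleOfIsUnitDet _ (isUnit_iff_ne_zero.mpr hD.det_pos.ne')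
  have hBH : (Matrix.fromBlocks (T₂ * C) (-(T₂' * C')) (-(T₂ * C)) (T₂' * C'))ᴴ =
      Matrix.fromBlocks (Cᵀ * T₂) (-(Cᵀ * T₂)) (-(C'ᵀ * T₂')) (C'ᵀ * T₂') := by
    simp [Matrix.fromBlocks_conjTranspose, Matrix.conjTranspose_eq_transpose_of_trivial,
      Matrix.fromBlocks_transpose, Matrix.transpose_neg, Matrix.transpose_mul, ← hT₂, ← hT₂']
  rw [← hBH, Matrix.PosDef.fromBlocks₂₂ _ _ hD]
  have hDinv : (Matrix.fromBlocks P 0 0 P')⁻¹ = Matrix.fromBlocks P⁻¹ 0 0 P'⁻¹ := by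
    apply inv_eq_right_inv
    rw [Matrix.fromBlocks_multiply]
    simp [Matrix.mul_nonsing_inv P (isUnit_iff_ne_zero.mpr hP.det_pos.ne'),
      Matrix.mul_nonsing_inv P' (isUnit_iff_ne_zero.mpr hP'.det_pos.ne'),
      ← Matrix.fromBlocks_one]
  set M := T₁ - (T₂ * C * P⁻¹ * Cᵀ * T₂ + T₂' * C' * P'⁻¹ * C'ᵀ * T₂') with hM
  have key : Matrix.fromBlocks T₁ (-T₁) (-T₁) T₁ -
      Matrix.fromBlocks (T₂ * C) (-(T₂' * C')) (-(T₂ * C)) (T₂' * C') *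
        (Matrix.fromBlocks P 0 0 P')⁻¹ *
        (Matrix.fromBlocks (T₂ * C) (-(T₂' * C')) (-(T₂ * C)) (T₂' * C'))ᴴ =
      Matrix.fromBlocks M (-M) (-M) M := by
    rw [hDinv, hBH, Matrix.fromBlocks_multiply, Matrix.fromBlocks_multiply, hM,
      fromBlocks_sub']
    refine Matrix.fromBlocks_inj.mpr ⟨?_, ?_, ?_, ?_⟩ <;>
      simp only [Matrix.mul_zero, Matrix.zero_mul, add_zero, zero_add, Matrix.neg_mul,
        Matrix.mul_neg, neg_neg, Matrix.mul_assoc] <;> abel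
  rw [key, aux_block_posSemidef_iff]
end
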